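/- arXiv:1510.01640 — 8 statements merged into one kernel-verified Lean document; each statement's English description precedes it below -/
import Mathlib

section
/- The least solution in [0,1] of the equation x = 1/12 + (2/3)x² is x = (3 - √7)/4, which is irrational. -/
/-!
Clearing denominators, the fixed-point equation is `8x² - 12x + 1 = 0`, whose roots are
`(3 ± √7)/4`. Since `2 < √7 < 3`, the smaller root lies in `[0, 1]` and the larger one exceeds `1`.
The smaller root is irrational because `√7` is.
-/

lemma two_lt_sqrt_seven : 2 < √7 := by
  rw [Real.lt_sqrt zero_le_two]
  norm_num

lemma sqrt_seven_lt_three : √7 < 3 := by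
  rw [Real.sqrt_lt' three_pos]
  norm_num

lemma fixedPoint_eq_iff (x : ℝ) :
    x = 1/12 + (2/3) * x^2 ↔ x = (3 - √7)/4 ∨ x = (3 + √7)/4 := by
  have hdiscrim : discrim (8 : ℝ) (-12) 1 = (4 * √7) * (4 * √7) := by
    rw [discrim, mul_mul_mul_comm, Real.mul_self_sqrt (by norm_num)]
    norm_num
  have hroots := quadratic_eq_zero_iff (by norm_num : (8 : ℝ) ≠ 0) hdiscrim x
  have hquad : x = 1/12 + (2/3) * x^2 ↔ 8 * (x * x) + -12 * x + 1 = 0 := by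
    constructor <;> intro h
    · linear_combination (-12) * h
    · linear_combination (-1/12) * h
  have hplus : (- -12 + 4 * √7) / (2 * 8) = (3 + √7)/4 := by ring
  have hminus : (- -12 - 4 * √7) / (2 * 8) = (3 - √7)/4 := by ring
  rw [hquad, hroots, hplus, hminus, or_comm]

lemma irrational_three_sub_sqrt_seven_div_four : Irrational ((3 - √7)/4) := by
  have h := ((Nat.prime_seven.irrational_sqrt).ratCast_sub 3).div_natCast (m := 4) (by norm_num)
  push_cast at h
  exact h

theorem stmt_1 :
    IsLeast {x : ℝ | x ∈ Set.Icc (0:ℝ) 1 ∧ x = 1/12 + (2/3) * x^2} ((3 - Real.sqrt 7)/4) ∧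
    Irrational ((3 - Real.sqrt 7)/4) := by
  have hlt := two_lt_sqrt_seven
  have hgt := sqrt_seven_lt_three
  refine ⟨⟨⟨⟨by linarith, by linarith⟩, (fixedPoint_eq_iff _).2 (Or.inl rfl)⟩, ?_⟩,
    irrational_three_sub_sqrt_seven_div_four⟩
  rintro y ⟨⟨-, hy1⟩, hy⟩
  rcases (fixedPoint_eq_iff y).1 hy with rfl | rfl
  · exact le_rfl
  · linarith
end

section
/- There exists a real number r in [0,1] that is the least solution in [0,1] of x = 1/3·((3-√7)/4)² + (2/3)x², namely r = (3 - √(1+3√7))/4, and r is irrational. -/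
/-!
Clearing denominators, the equation reads `2x² - 3x + c² = 0`, whose discriminant is
`9 - 8c² = 1 + 3√7`; its roots are `(3 ± √(1 + 3√7))/4`, and only the smaller one lies in `[0, 1]`.
If that root were rational, so would be `√(1 + 3√7)`, hence `1 + 3√7`, hence `√7`.
-/

open Real

lemma Irrational.sqrt {y : ℝ} (h : Irrational y) (hy : 0 ≤ y) : Irrational √y :=
  Irrational.of_pow 2 (by rwa [sq_sqrt hy])

section FixedPoint

variable {k t : ℝ}

lemma eq_fixedPoint_iff (ht : t ^ 2 = 9 - 8 * k) (x : ℝ) :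
    x = (1 / 3) * k + (2 / 3) * x ^ 2 ↔ x = (3 + t) / 4 ∨ x = (3 - t) / 4 := by
  have hdisc : discrim 2 (-3) k = t * t := by rw [discrim]; linear_combination -ht
  have hquad := quadratic_eq_zero_iff two_ne_zero hdisc x
  norm_num at hquad
  rw [← hquad]
  constructor <;> intro h
  · linear_combination (-3) * h
  · linear_combination (-1 / 3) * h

lemma isLeast_fixedPoint (ht0 : 0 ≤ t) (ht3 : t ≤ 3) (ht : t ^ 2 = 9 - 8 * k) :
    IsLeast {x : ℝ | x ∈ Set.Icc (0 : ℝ) 1 ∧ x = (1 / 3) * k + (2 / 3) * x ^ 2} ((3 - t) / 4) := by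
  refine ⟨⟨⟨by linarith, by linarith⟩, (eq_fixedPoint_iff ht _).2 (Or.inr rfl)⟩, ?_⟩
  rintro x ⟨-, hx⟩
  rcases (eq_fixedPoint_iff ht x).1 hx with rfl | rfl <;> linarith

end FixedPoint

lemma sq_sqrt_one_add_three_mul_sqrt_seven :
    √(1 + 3 * √7) ^ 2 = 9 - 8 * ((3 - √7) / 4) ^ 2 := by
  have h7 : √7 ^ 2 = 7 := sq_sqrt (by norm_num)
  rw [sq_sqrt (by positivity)]
  linear_combination (1 / 2) * h7

lemma sqrt_one_add_three_mul_sqrt_seven_le_three : √(1 + 3 * √7) ≤ 3 := by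
  have h7 : √7 ≤ 8 / 3 := by
    rw [sqrt_le_left (by norm_num)]
    norm_num
  rw [sqrt_le_left (by norm_num)]
  linarith

lemma irrational_sqrt_one_add_three_mul_sqrt_seven : Irrational √(1 + 3 * √7) := by
  have h7 : Irrational √7 := by exact_mod_cast Nat.prime_seven.irrational_sqrt
  have h : Irrational (1 + 3 * √7) := by
    exact_mod_cast (h7.natCast_mul (m := 3) (by norm_num)).natCast_add 1
  exact h.sqrt (by positivity)

theorem stmt_2 :
    ∃ r ∈ Set.Icc (0:ℝ) 1,
      IsLeast {x : ℝ | x ∈ Set.Icc (0:ℝ) 1 ∧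
        x = (1/3) * ((3 - Real.sqrt 7)/4)^2 + (2/3) * x^2} r ∧
      r = (3 - Real.sqrt (1 + 3 * Real.sqrt 7))/4 ∧
      Irrational r := by
  have hleast := isLeast_fixedPoint (sqrt_nonneg _) sqrt_one_add_three_mul_sqrt_seven_le_three
    sq_sqrt_one_add_three_mul_sqrt_seven
  refine ⟨_, hleast.1.1, hleast, rfl, ?_⟩
  exact_mod_cast (irrational_sqrt_one_add_three_mul_sqrt_seven.natCast_sub 3).div_natCast
    (m := 4) (by norm_num)
end

section
/- The number (3 - √(1+3√7))/4 is not a quadratic irrational; that is, it is irrational and is not a root of any quadratic polynomial with rational coefficients. -/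
/-!
Put `s = √(1 + 3√7)`, so that `(3 - s)/4` is an affine image of `s` and it suffices to show that
`1, s, s²` are linearly independent over `ℚ`. A relation `a s² + b s + c = 0` becomes
`b s = -(a + c) - 3a√7` after substituting `s² = 1 + 3√7`. Squaring and comparing the rational and
`√7` parts (using that `√7` is irrational) gives `b² = 2a(a + c)` and `b² = (a + c)² + 63a²`, whence
`c² + 62a² = 0`, and so `a = b = c = 0`.
-/

theorem Irrational.ratCast_mul_add_ratCast_eq_zero_iff {r : ℝ} (hr : Irrational r) {u v : ℚ} :
    (u : ℝ) * r + v = 0 ↔ u = 0 ∧ v = 0 := by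
  refine ⟨fun h => ?_, fun ⟨hu, hv⟩ => by simp [hu, hv]⟩
  by_cases hu : u = 0
  · subst hu
    exact ⟨rfl, by simpa using h⟩
  · exact absurd h ((hr.ratCast_mul hu).add_ratCast v).ne_zero

theorem irrational_sqrt_seven : Irrational √7 := by
  simpa using Nat.prime_seven.irrational_sqrt

theorem eq_zero_of_ratCast_mul_sqrt_one_add_three_mul_sqrt_seven_sq_add {a b c : ℚ}
    (h : (a : ℝ) * √(1 + 3 * √7) ^ 2 + b * √(1 + 3 * √7) + c = 0) :
    a = 0 ∧ b = 0 ∧ c = 0 := by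
  set s := √(1 + 3 * √7)
  have hs : s ^ 2 = 1 + 3 * √7 := Real.sq_sqrt (by positivity)
  have h7 : √7 ^ 2 = 7 := Real.sq_sqrt (by norm_num)
  have hlin : (b : ℝ) * s = -(a + c) - 3 * a * √7 := by linear_combination h - (a : ℝ) * hs
  have hb : b = 0 := by
    by_contra hb
    have hsq : ((3 * b ^ 2 - 6 * a * (a + c) : ℚ) : ℝ) * √7 + ((b ^ 2 - (a + c) ^ 2 - 63 * a ^ 2 : ℚ) : ℝ)
        = 0 := by
      push_cast
      linear_combination ((b : ℝ) * s - (a + c) - 3 * a * √7) * hlin - (b : ℝ) ^ 2 * hs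
        + 9 * (a : ℝ) ^ 2 * h7
    obtain ⟨h1, h2⟩ := irrational_sqrt_seven.ratCast_mul_add_ratCast_eq_zero_iff.mp hsq
    have : 0 < b ^ 2 := by positivity
    nlinarith [sq_nonneg a, sq_nonneg c]
  subst hb
  have hsep : ((3 * a : ℚ) : ℝ) * √7 + ((a + c : ℚ) : ℝ) = 0 := by
    push_cast at hlin ⊢
    linear_combination hlin
  obtain ⟨ha, hac⟩ := irrational_sqrt_seven.ratCast_mul_add_ratCast_eq_zero_iff.mp hsep
  exact ⟨by linarith, rfl, by linarith⟩

theorem stmt_3 :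
    Irrational ((3 - Real.sqrt (1 + 3 * Real.sqrt 7))/4) ∧
    ∀ a b c : ℚ, a ≠ 0 →
      (a : ℝ) * ((3 - Real.sqrt (1 + 3 * Real.sqrt 7))/4)^2 +
        (b : ℝ) * ((3 - Real.sqrt (1 + 3 * Real.sqrt 7))/4) + (c : ℝ) ≠ 0 := by
  constructor
  · rintro ⟨r, hr⟩
    obtain ⟨-, h10, -⟩ := eq_zero_of_ratCast_mul_sqrt_one_add_three_mul_sqrt_seven_sq_add
      (a := 0) (b := 1) (c := 4 * r - 3) (by push_cast; linear_combination 4 * hr)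
    exact one_ne_zero h10
  · intro a b c ha h
    obtain ⟨ha16, -, -⟩ := eq_zero_of_ratCast_mul_sqrt_one_add_three_mul_sqrt_seven_sq_add
      (a := a / 16) (b := -(3 * a / 8) - b / 4) (c := 9 * a / 16 + 3 * b / 4 + c)
      (by push_cast; linear_combination h)
    exact ha (by linarith)
end

section
/- The unique solution (x₁, x₂) ∈ [0,1]² of the system where x₁ is the least solution in [0,1] of x₁ = (1/3)x₂² + (2/3)x₁² (for fixed x₂), and x₂ is the greatest value in [0,1] satisfying x₂ = (1/3)x₂² + (2/3)x₁² with x₁ so determined, is (0, 0). -/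
/-!
The inner least fixed point `w` and the outer value `z` solve the same equation
`· = z²/3 + 2·²/3`, so `w = z` and hence `z = z²`, i.e. `z ∈ {0, 1}`. The value `z = 1` is
impossible: for `z = 1` the inner equation also has the root `1/2`, so its least solution is
not `1`. Thus `x₂ = 0`, and the least solution of `y = 2y²/3` in `[0, 1]` is `x₁ = 0`.
-/

open Set

def innerSolutions (z : ℝ) : Set ℝ := {y | y ∈ Icc (0:ℝ) 1 ∧ y = (1/3) * z^2 + (2/3) * y^2}

lemma half_mem_innerSolutions_one : (1/2 : ℝ) ∈ innerSolutions 1 :=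
  ⟨⟨by norm_num, by norm_num⟩, by norm_num⟩

lemma isLeast_innerSolutions_zero : IsLeast (innerSolutions 0) 0 :=
  ⟨⟨⟨le_rfl, zero_le_one⟩, by norm_num⟩, fun _ hy => hy.1.1⟩

lemma eq_of_mem_innerSolutions {z w : ℝ} (hw : w ∈ innerSolutions z)
    (hz : z = (1/3) * z^2 + (2/3) * w^2) : w = z := by
  linarith [hw.2]

lemma eq_zero_of_isLeast_innerSolutions_self {z : ℝ} (hz : IsLeast (innerSolutions z) z) :
    z = 0 := by
  have hsq : z * (z - 1) = 0 := by linear_combination -hz.1.2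
  rcases mul_eq_zero.mp hsq with h | h
  · exact h
  · have hz1 : z = 1 := by linarith
    subst hz1
    linarith [hz.2 half_mem_innerSolutions_one]

theorem stmt_5 :
    ∀ x₁ x₂ : ℝ,
      IsLeast {y : ℝ | y ∈ Set.Icc (0:ℝ) 1 ∧ y = (1/3) * x₂^2 + (2/3) * y^2} x₁ →
      IsGreatest {z : ℝ | z ∈ Set.Icc (0:ℝ) 1 ∧
        ∃ w : ℝ, IsLeast {y : ℝ | y ∈ Set.Icc (0:ℝ) 1 ∧ y = (1/3) * z^2 + (2/3) * y^2} w ∧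
          z = (1/3) * z^2 + (2/3) * w^2} x₂ →
      x₁ = 0 ∧ x₂ = 0 := by
  intro x₁ x₂ h₁ h₂
  obtain ⟨⟨-, w, hw, hx₂⟩, -⟩ := h₂
  have hw_least : IsLeast (innerSolutions x₂) w := hw
  obtain rfl : w = x₂ := eq_of_mem_innerSolutions hw_least.1 hx₂
  obtain rfl : w = 0 := eq_zero_of_isLeast_innerSolutions_self hw_least
  exact ⟨IsLeast.unique h₁ isLeast_innerSolutions_zero, rfl⟩
end

section
/- The only pair (x₂, x₁) ∈ [0,1]² satisfying x₂² + 2x₁² - 3x₁ = 0, 4x₁ ≤ 3, and x₂ = (1/3)x₂² + (2/3)x₁², with x₂ maximal among all such pairs, has x₂ = 0. -/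
theorem stmt_7 :
    IsGreatest {x₂ : ℝ | x₂ ∈ Set.Icc (0:ℝ) 1 ∧
      ∃ x₁ ∈ Set.Icc (0:ℝ) 1,
        x₂^2 + 2 * x₁^2 - 3 * x₁ = 0 ∧ 4 * x₁ ≤ 3 ∧
        x₂ = (1/3) * x₂^2 + (2/3) * x₁^2} 0 := by
  refine ⟨⟨⟨le_rfl, zero_le_one⟩, 0, ⟨le_rfl, zero_le_one⟩, by norm_num, by norm_num, by norm_num⟩, ?_⟩
  rintro x₂ ⟨-, x₁, -, hsum, hle, hfix⟩
  -- both equations say that `x₂ ^ 2 + 2 * x₁ ^ 2` is three times `x₂` and three times `x₁`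
  have hdiag : x₂ = x₁ := by linear_combination hfix + hsum / 3
  subst hdiag
  have hroots : x₂ * (x₂ - 1) = 0 := by linear_combination hsum / 3
  rcases mul_eq_zero.1 hroots with hzero | hone <;> linarith
end

section
/- For each n ∈ ℕ, the complement of the set L_n = {t ∈ {a,b,c}^({L,R}*) : every infinite branch of t contains at least n occurrences of the letter a} is nowhere dense in the product topology. -/
/-- The alphabet {a,b,c}, with `0` playing the role of the letter `a`. -/
abbrev Letter := Fin 3

/-- The prefix of length `n` of an infinite branch `b : ℕ → Bool`,
viewed as a vertex of the full binary tree `{L,R}*` (encoded as `List Bool`). -/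
def branchPrefix (b : ℕ → Bool) (n : ℕ) : List Bool := List.ofFn (fun i : Fin n => b i)

/-- The set of trees having at least `n` occurrences of the letter `a` on every branch. -/
def Ln (n : ℕ) : Set (List Bool → Letter) :=
  {t | ∀ b : ℕ → Bool, ∃ s : Finset ℕ, s.card = n ∧ ∀ m ∈ s, t (branchPrefix b m) = 0}

/-!
Fixing the letter `a` on `n` consecutive levels of the tree puts `a` at least `n` times on every
branch, and this is an open condition. Levels lying below every vertex that a basic open set
constrains are free, so every basic open set contains such a tree: the interior of `Ln n` is dense,
which is the same as its complement being nowhere dense.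
-/

open Set

theorem isNowhereDense_compl_of_dense_interior {X : Type*} [TopologicalSpace X] {s : Set X}
    (h : Dense (interior s)) : IsNowhereDense sᶜ := by
  rw [IsNowhereDense, closure_compl, interior_compl, h.closure_eq, compl_univ]

theorem dense_interior_of_forall_finset_exists_pi_subset {ι X : Type*} [TopologicalSpace X]
    [DiscreteTopology X] {A : Set (ι → X)} (x₀ : ι → X)
    (h : ∀ I : Finset ι, ∃ S : Set ι, S.Finite ∧ Disjoint (I : Set ι) S ∧
      S.pi (fun i => {x₀ i}) ⊆ A) :
    Dense (interior A) := by
  classical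
  rw [dense_iff_inter_open]
  rintro U hU ⟨t, htU⟩
  obtain ⟨I, u, htu, huU⟩ := isOpen_pi_iff.mp hU t htU
  obtain ⟨S, hS, hIS, hSA⟩ := h I
  have hpinned : S.piecewise x₀ t ∈ S.pi (fun i => {x₀ i}) := fun i hi => by
    simp [piecewise_eq_of_mem _ _ _ hi]
  have hagree : S.piecewise x₀ t ∈ U := huU fun i hi => by
    rw [piecewise_eq_of_notMem _ _ _ (hIS.notMem_of_mem_left hi)]
    exact (htu i hi).2
  have hopen : IsOpen (S.pi fun i => ({x₀ i} : Set X)) :=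
    isOpen_set_pi hS fun _ _ => isOpen_discrete _
  exact ⟨_, hagree, mem_interior.mpr ⟨_, hSA, hopen, hpinned⟩⟩

def levelBand (D n : ℕ) : Set (List Bool) := {v | D ≤ v.length ∧ v.length < D + n}

theorem levelBand_finite (D n : ℕ) : (levelBand D n).Finite :=
  (List.finite_length_lt Bool (D + n)).subset fun _ hv => hv.2

theorem length_branchPrefix (b : ℕ → Bool) (m : ℕ) : (branchPrefix b m).length = m := by
  simp [branchPrefix]

theorem pi_levelBand_subset_Ln (D n : ℕ) : (levelBand D n).pi (fun _ => {0}) ⊆ Ln n := by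
  intro t ht b
  refine ⟨Finset.Ico D (D + n), by simp, fun m hm => ht _ ?_⟩
  rw [Finset.mem_Ico] at hm
  rwa [levelBand, mem_ofPred_eq, length_branchPrefix]

theorem dense_interior_Ln (n : ℕ) : Dense (interior (Ln n)) := by
  refine dense_interior_of_forall_finset_exists_pi_subset (fun _ => 0) fun I => ?_
  set D := I.sup List.length + 1
  refine ⟨levelBand D n, levelBand_finite D n, ?_, pi_levelBand_subset_Ln D n⟩
  refine disjoint_left.mpr fun v hvI hvD => ?_
  have hshallow : v.length < D := Nat.lt_succ_of_le (Finset.le_sup (f := List.length) hvI)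
  exact absurd hvD.1 hshallow.not_ge

theorem stmt_12 (n : ℕ) : IsNowhereDense (Ln n)ᶜ :=
  isNowhereDense_compl_of_dense_interior (dense_interior_Ln n)
end

section
/- Define the sequence (c_n) by c₁ = least solution in [0,1] of x = 1/3 + (2/3)x², and c_{n+1} = least solution in [0,1] of x = (1/3)c_n² + (2/3)x². Then (c_n) is strictly decreasing and converges to 0. -/
/-!
Since `1/2` solves the first equation, `c 0 ≤ 1/2`; and at `x = (c n)²` the right-hand side of
the recursion is at most `x`, so `c (n+1) ≤ (c n)²`. Repeated squaring below `1/2` drives the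
sequence to `0` at least geometrically.
-/

open Filter Topology

def quadFixedPts (b : ℝ) : Set ℝ := {x | x ∈ Set.Icc (0:ℝ) 1 ∧ x = b + (2/3) * x^2}

theorem IsLeast.pos_of_quadFixedPts {b y : ℝ} (hy : IsLeast (quadFixedPts b) y) (hb : 0 < b) :
    0 < y := by
  have hfix : y = b + 2/3 * y^2 := hy.1.2
  nlinarith [sq_nonneg y]

/-- `x ↦ b + (2/3) x² - x` changes sign on `[0, t]`, so it has a root there. -/
theorem IsLeast.le_of_quadFixedPts {b y t : ℝ} (hy : IsLeast (quadFixedPts b) y) (hb : 0 ≤ b)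
    (ht : t ≤ 1) (hbt : b + 2/3 * t^2 ≤ t) : y ≤ t := by
  have ht0 : 0 ≤ t := by nlinarith [sq_nonneg t]
  have hcont : ContinuousOn (fun x : ℝ => b + 2/3 * x^2 - x) (Set.Icc 0 t) := by fun_prop
  have hsign : (0:ℝ) ∈ Set.Icc (b + 2/3 * t^2 - t) (b + 2/3 * 0^2 - 0) :=
    ⟨by linarith, by norm_num [hb]⟩
  obtain ⟨z, hz, hz0⟩ := intermediate_value_Icc' ht0 hcont hsign
  have hzfix : z ∈ quadFixedPts b := ⟨⟨hz.1, hz.2.trans ht⟩, by linarith [hz0]⟩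
  exact (hy.2 hzfix).trans hz.2

/-- While `u n ≤ u 0 < 1`, squaring contracts by the factor `u 0`. -/
theorem strictAnti_and_tendsto_zero_of_le_sq {u : ℕ → ℝ} (hpos : ∀ n, 0 < u n) (h0 : u 0 < 1)
    (hsq : ∀ n, u (n+1) ≤ u n ^ 2) : StrictAnti u ∧ Tendsto u atTop (𝓝 0) := by
  have hle : ∀ n, u n ≤ u 0 := by
    intro n
    induction n with
    | zero => rfl
    | succ n ih => nlinarith [hsq n, hpos n]
  have hstep : ∀ n, u (n+1) ≤ u 0 * u n := fun n =>
    (hsq n).trans (by rw [sq]; exact mul_le_mul_of_nonneg_right (hle n) (hpos n).le)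
  refine ⟨strictAnti_nat_of_succ_lt fun n => by nlinarith [hstep n, hpos n], ?_⟩
  have hgeom : Tendsto (fun n => u 0 ^ n * u 0) atTop (𝓝 0) := by
    simpa using (tendsto_pow_atTop_nhds_zero_of_lt_one (hpos 0).le h0).mul_const (u 0)
  exact tendsto_of_tendsto_of_tendsto_of_le_of_le tendsto_const_nhds hgeom
    (fun n => (hpos n).le) fun n => le_geom (hpos 0).le n fun k _ => hstep k

/-- `c 0` is the probability of `L₁`, and `c n` that of `L_{n+1}`. -/
theorem stmt_17 (c : ℕ → ℝ)
    (h1 : IsLeast {x : ℝ | x ∈ Set.Icc (0:ℝ) 1 ∧ x = 1/3 + (2/3) * x^2} (c 0))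
    (hrec : ∀ n : ℕ,
      IsLeast {x : ℝ | x ∈ Set.Icc (0:ℝ) 1 ∧ x = (1/3) * (c n)^2 + (2/3) * x^2} (c (n+1))) :
    StrictAnti c ∧ Tendsto c atTop (nhds 0) := by
  change IsLeast (quadFixedPts (1/3)) (c 0) at h1
  change ∀ n, IsLeast (quadFixedPts ((1/3) * (c n)^2)) (c (n+1)) at hrec
  have hpos : ∀ n, 0 < c n := by
    intro n
    induction n with
    | zero => exact h1.pos_of_quadFixedPts (by norm_num)
    | succ n ih => exact (hrec n).pos_of_quadFixedPts (by positivity)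
  have hle_one : ∀ n, c n ≤ 1 := by
    rintro (_ | n)
    exacts [h1.1.1.2, (hrec n).1.1.2]
  have hc0 : c 0 ≤ 1/2 := h1.le_of_quadFixedPts (by norm_num) (by norm_num) (by norm_num)
  refine strictAnti_and_tendsto_zero_of_le_sq hpos (by linarith) fun n => ?_
  have hsq_le_one : c n ^ 2 ≤ 1 := pow_le_one₀ (hpos n).le (hle_one n)
  exact (hrec n).le_of_quadFixedPts (by positivity) hsq_le_one (by nlinarith [hpos n])
end

section
/- The polynomial 256x⁴ - 768x³ + 832x² - 384x + 1 has exactly two real roots, and its smallest real root lies in the open interval (0, 1). -/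
/-! With `y = (4x - 3)²` the quartic is `(y - 1)² - 63`, so a real root has `y = 1 + √63`
(the branch `y = 1 - √63` is negative). Hence the roots are `(3 ± c) / 4` with
`c = √(1 + √63)`, and `0 < c < 3` puts the smaller one in `(0, 1)`. -/

open Real

lemma sq_sq_sub_eq_iff {a b u : ℝ} (hab : |a| < √b) :
    (u ^ 2 - a) ^ 2 = b ↔ u = √(a + √b) ∨ u = -√(a + √b) := by
  obtain ⟨h₁, h₂⟩ := abs_lt.1 hab
  have hb : 0 ≤ b := (sqrt_pos.1 (by linarith)).le
  rw [← sq_eq_sq_iff_eq_or_eq_neg (a := u), sq_sqrt (by linarith),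
    ← sq_sqrt hb, sq_eq_sq_iff_eq_or_eq_neg, sq_sqrt hb]
  constructor
  · rintro (h | h)
    · linarith
    · nlinarith [sq_nonneg u]
  · intro h
    left
    linarith

lemma quartic_eq (x : ℝ) :
    256 * x ^ 4 - 768 * x ^ 3 + 832 * x ^ 2 - 384 * x + 1 = ((4 * x - 3) ^ 2 - 1) ^ 2 - 63 := by
  ring

lemma quartic_eq_zero_iff (x : ℝ) :
    256 * x ^ 4 - 768 * x ^ 3 + 832 * x ^ 2 - 384 * x + 1 = 0 ↔
      x = (3 - √(1 + √63)) / 4 ∨ x = (3 + √(1 + √63)) / 4 := by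
  rw [quartic_eq, sub_eq_zero, sq_sq_sub_eq_iff (by rw [abs_one, lt_sqrt zero_le_one]; norm_num)]
  constructor <;> rintro (h | h) <;> [right; left; right; left] <;> linarith

lemma sqrt_one_add_sqrt_sixtythree_lt_three : √(1 + √63) < 3 := by
  have : √63 < 8 := by rw [sqrt_lt' (by norm_num)]; norm_num
  rw [sqrt_lt' (by norm_num)]
  linarith

theorem stmt_19 :
    ∃ r s : ℝ, r < s ∧
      (256 * r^4 - 768 * r^3 + 832 * r^2 - 384 * r + 1 = 0) ∧
      (256 * s^4 - 768 * s^3 + 832 * s^2 - 384 * s + 1 = 0) ∧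
      (∀ t : ℝ, 256 * t^4 - 768 * t^3 + 832 * t^2 - 384 * t + 1 = 0 → t = r ∨ t = s) ∧
      r ∈ Set.Ioo (0:ℝ) 1 := by
  have hc_pos : 0 < √(1 + √63) := sqrt_pos.2 (by positivity)
  have hc_lt := sqrt_one_add_sqrt_sixtythree_lt_three
  refine ⟨(3 - √(1 + √63)) / 4, (3 + √(1 + √63)) / 4, by linarith,
    (quartic_eq_zero_iff _).2 (.inl rfl), (quartic_eq_zero_iff _).2 (.inr rfl),
    fun t => (quartic_eq_zero_iff t).1, by constructor <;> linarith⟩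
end
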